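/- arXiv:1608.02177 — 6 statements merged into one kernel-verified Lean document; each statement's English description precedes it below -/
import Mathlib

section
/- Let d ≥ 2 with d ≡ 3 (mod 4) and let c be any integer. If p is a prime with p ≡ 1 (mod 4), then p ∉ S_{d,c}. -/
/-- The map induced by `φ(x) = x^d + c` on `ℤ/pℤ` is a permutation consisting of a
single cycle of length `p`: it is a bijection and the orbit of every element has
exactly `p` elements. -/
def SinglePCycle (d : ℕ) (c : ℤ) (p : ℕ) : Prop :=
  Function.Bijective (fun x : ZMod p => x ^ d + (c : ZMod p)) ∧
  ∀ x : ZMod p,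
    Set.ncard (Set.range fun k : ℕ => (fun y : ZMod p => y ^ d + (c : ZMod p))^[k] x) = p

/-- `S_{d,c}`: the set of primes `p` for which `x ↦ x^d + c` is a single `p`-cycle on `ℤ/pℤ`. -/
def Scycle (d : ℕ) (c : ℤ) : Set ℕ := {p | p.Prime ∧ SinglePCycle d c p}

/-!
A single `p`-cycle is an even permutation because `p` is odd, and so is the translation
`x ↦ x + c`; hence `x ↦ x ^ d` would be an even permutation of `ℤ/pℤ`. It fixes `0`, and on the
cyclic group `(ℤ/pℤ)ˣ ≅ ℤ/(p-1)` it is multiplication by `d`. Write `p - 1 = 2m` and identify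
`ℤ/2m` with `ℤ/m × ℤ/2` through `a + m b ↤ (a, b)`. Since `d` is odd, multiplication by `d` becomes
`(a, b) ↦ (d a, b + ⌊d a / m⌋)`, of sign `(-1) ^ ∑ₐ ⌊d a / m⌋ = (-1) ^ ((d - 1) (m - 1) / 2)`,
and this is `-1` when `d ≡ 3 (mod 4)` and `m` is even.
-/

open Equiv Equiv.Perm Finset

namespace Equiv.Perm

theorem sameCycle_of_ncard_range_iterate {α : Type*} [Finite α] {σ : Perm α} {x : α}
    (h : (Set.range fun k : ℕ => σ^[k] x).ncard = Nat.card α) (y : α) : σ.SameCycle x y := by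
  have hrange := Set.eq_of_subset_of_ncard_le (Set.subset_univ (Set.range fun k : ℕ => σ^[k] x))
    (by rw [Set.ncard_univ, h])
  obtain ⟨k, hk⟩ := hrange ▸ Set.mem_univ y
  exact ⟨k, by rw [zpow_natCast, ← iterate_eq_pow]; exact hk⟩

variable {α : Type*} [Fintype α] [DecidableEq α]

theorem sign_eq_one_of_pow_eq_one {σ : Perm α} {n : ℕ} (hσ : σ ^ n = 1) (hn : Odd n) :
    sign σ = 1 := by
  rw [← pow_one (sign σ), ← Nat.odd_iff.1 hn, ← Int.units_pow_eq_pow_mod_two, ← map_pow, hσ,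
    map_one]

theorem sign_addRight_of_odd_card [AddGroup α] (a : α) (hα : Odd (Fintype.card α)) :
    sign (Equiv.addRight a) = 1 :=
  sign_eq_one_of_pow_eq_one (by rw [nsmul_addRight, card_nsmul_eq_zero, addRight_zero]) hα

theorem sign_eq_one_of_forall_sameCycle {σ : Perm α} {x : α} (h : ∀ y, σ.SameCycle x y)
    (hα : Odd (Fintype.card α)) : sign σ = 1 := by
  by_cases hx : σ x = x
  · rw [show σ = 1 from Equiv.ext fun y => (h y).apply_eq_self_iff.1 hx, map_one]
  · have hsupp : σ.support = univ :=
      eq_univ_of_forall fun y => mem_support.2 fun hy => hx ((h y).apply_eq_self_iff.2 hy)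
    rw [IsCycle.sign ⟨x, hx, fun y _ => h y⟩, hsupp, card_univ, hα.neg_one_pow, neg_neg]

end Equiv.Perm

namespace ZMod

theorem two_mul_sum_mul_val_div {d m : ℕ} [NeZero m] (h : d.Coprime m) :
    2 * ∑ a : ZMod m, d * a.val / m = (d - 1) * (m - 1) := by
  set S := ∑ a : ZMod m, d * a.val / m
  set T := ∑ a : ZMod m, a.val
  have hres : ∑ a : ZMod m, d * a.val % m = T := by
    simpa [val_mul, val_natCast] using
      Equiv.sum_comp (Units.mulLeft (unitOfCoprime d h)) (fun a : ZMod m => a.val)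
  have hT : T * 2 = m * (m - 1) := by
    obtain ⟨k, rfl⟩ : ∃ k, m = k + 1 := Nat.exists_eq_succ_of_ne_zero (NeZero.ne m)
    rw [← sum_range_id_mul_two, sum_range]
    rfl
  have hST : m * S + T = d * T := calc
    m * S + T = ∑ a : ZMod m, (m * (d * a.val / m) + d * a.val % m) := by
      rw [hres.symm, mul_sum, ← sum_add_distrib]
    _ = d * T := by rw [mul_sum]; exact sum_congr rfl fun a _ => Nat.div_add_mod _ _
  apply Nat.eq_of_mul_eq_mul_left (Nat.pos_of_neZero m)
  obtain _ | e := d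
  · rw [Nat.zero_sub, zero_mul, mul_zero]
    nlinarith
  · rw [Nat.add_sub_cancel]
    nlinarith

noncomputable def prodZModTwoEquiv (m : ℕ) [NeZero m] : ZMod m × ZMod 2 ≃ ZMod (2 * m) :=
  Equiv.ofBijective (fun x => ((x.1.val + m * x.2.val : ℕ) : ZMod (2 * m))) <| by
    rw [Fintype.bijective_iff_injective_and_card, Fintype.card_prod, ZMod.card, ZMod.card,
      ZMod.card]
    refine ⟨fun ⟨a, b⟩ ⟨a', b'⟩ hab => ?_, mul_comm _ _⟩
    have hval (x : ZMod m) (y : ZMod 2) :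
        ((x.val + m * y.val : ℕ) : ZMod (2 * m)).val = x.val + m * y.val := by
      have := x.val_lt; have : y.val < 2 := y.val_lt
      exact ZMod.val_cast_of_lt (by nlinarith)
    have hnat : a.val + m * b.val = a'.val + m * b'.val := by
      rw [← hval a b, ← hval a' b']
      exact congrArg ZMod.val hab
    have hpos := NeZero.pos m
    have hb := congrArg (· / m) hnat
    have ha := congrArg (· % m) hnat
    simp only [Nat.add_mul_div_left _ _ hpos, Nat.add_mul_mod_self_left, Nat.div_eq_of_lt a.val_lt,
      Nat.div_eq_of_lt a'.val_lt, Nat.mod_eq_of_lt a.val_lt, Nat.mod_eq_of_lt a'.val_lt,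
      zero_add] at ha hb
    exact Prod.ext (ZMod.val_injective _ ha) (ZMod.val_injective _ hb)

theorem prodZModTwoEquiv_apply {m : ℕ} [NeZero m] (a : ZMod m) (b : ZMod 2) :
    prodZModTwoEquiv m (a, b) = ((a.val + m * b.val : ℕ) : ZMod (2 * m)) := rfl

theorem natCast_mul_prodZModTwoEquiv {m d : ℕ} [NeZero m] (hd : Odd d) (a : ZMod m)
    (b : ZMod 2) :
    (d : ZMod (2 * m)) * prodZModTwoEquiv m (a, b) =
      prodZModTwoEquiv m (d * a, b + ((d * a.val / m : ℕ) : ZMod 2)) := by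
  obtain ⟨e, rfl⟩ := hd
  have hk := Nat.div_add_mod ((2 * e + 1) * a.val) m
  set k := (2 * e + 1) * a.val / m
  have hbk := Nat.div_add_mod (b.val + k % 2) 2
  have hk2 := Nat.div_add_mod k 2
  have h2m : ((2 * m : ℕ) : ZMod (2 * m)) = 0 := ZMod.natCast_self _
  simp only [prodZModTwoEquiv_apply, ZMod.val_mul, ZMod.val_natCast, Nat.mod_mul_mod, ZMod.val_add]
  apply_fun ((↑) : ℕ → ZMod (2 * m)) at hk hbk hk2
  push_cast at *
  -- modulo `2 m`: `d m ≡ m` as `d` is odd, and `m x ≡ m (x % 2)`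
  linear_combination (↑e * ↑b.val + ↑((b.val + k % 2) / 2) + ↑(k / 2) : ZMod (2 * m)) * h2m
    - hk - (↑m : ZMod (2 * m)) * hbk - (↑m : ZMod (2 * m)) * hk2

theorem sign_addRight_two (b : ZMod 2) : sign (Equiv.addRight b) = (-1) ^ b.val := by
  fin_cases b <;> decide

theorem sign_mulLeft_unitOfCoprime {n d : ℕ} [NeZero n] (hn : 4 ∣ n) (hd : d % 4 = 3)
    (h : d.Coprime n) : sign (Units.mulLeft (unitOfCoprime d h)) = -1 := by
  obtain ⟨m, rfl⟩ : ∃ m, n = 2 * m := ⟨n / 2, by omega⟩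
  have : NeZero m := ⟨by rintro rfl; exact NeZero.ne (2 * 0) rfl⟩
  have hm : d.Coprime m := h.coprime_dvd_right (dvd_mul_left m 2)
  let lift : Perm (ZMod m × ZMod 2) :=
    prodCongrLeft (fun _ => Units.mulLeft (unitOfCoprime d hm)) *
      prodCongrRight fun a => Equiv.addRight ((d * a.val / m : ℕ) : ZMod 2)
  have hconj : Units.mulLeft (unitOfCoprime d h) = (prodZModTwoEquiv m).permCongr lift := by
    refine Equiv.ext fun x => ?_
    obtain ⟨⟨a, b⟩, rfl⟩ := (prodZModTwoEquiv m).surjective x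
    simp only [permCongr_apply, symm_apply_apply]
    exact natCast_mul_prodZModTwoEquiv (Nat.odd_iff.2 (by omega)) a b
  have hodd : Odd (∑ a : ZMod m, d * a.val / m) := by
    have := two_mul_sum_mul_val_div hm
    obtain ⟨t, rfl⟩ : ∃ t, d = 4 * t + 3 := ⟨d / 4, by omega⟩
    obtain ⟨u, rfl⟩ : ∃ u, m = 2 * u + 2 := ⟨m / 2 - 1, by have := NeZero.pos m; omega⟩
    refine ⟨(2 * t + 1) * u + t, Nat.eq_of_mul_eq_mul_left two_pos ?_⟩
    rw [this, show 4 * t + 3 - 1 = 2 * (2 * t + 1) by omega,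
      show 2 * u + 2 - 1 = 2 * u + 1 by omega]
    ring
  rw [hconj, sign_permCongr, map_mul, sign_prodCongrLeft, sign_prodCongrRight, prod_const,
    card_univ, ZMod.card, Int.units_sq, one_mul]
  simp only [sign_addRight_two, ZMod.val_natCast, ← Int.units_pow_eq_pow_mod_two]
  rw [prod_pow_eq_pow_sum, hodd.neg_one_pow]

end ZMod

theorem coprime_card_of_pow_injective {G : Type*} [Group G] [Finite G] {d : ℕ}
    (h : Function.Injective (· ^ d : G → G)) : (Nat.card G).Coprime d := by
  refine Nat.coprime_of_dvd fun q hq hqG hqd => ?_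
  have := Fact.mk hq
  obtain ⟨g, hg⟩ := exists_prime_orderOf_dvd_card' q hqG
  have hg1 : g = 1 := h <| by simp only [one_pow, ← orderOf_dvd_iff_pow_eq_one, hg, hqd]
  exact hq.one_lt.ne' (by rw [← hg, hg1, orderOf_one])

theorem sign_powCoprime_of_isCyclic {G : Type*} [Group G] [Fintype G] [DecidableEq G]
    [hG : IsCyclic G] {d : ℕ} (h4 : 4 ∣ Nat.card G) (hd : d % 4 = 3)
    (hco : (Nat.card G).Coprime d) : sign (powCoprime hco) = -1 := by
  have : NeZero (Nat.card G) := ⟨Nat.card_pos.ne'⟩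
  let ψ : ZMod (Nat.card G) ≃ G := Multiplicative.ofAdd.trans (zmodCyclicMulEquiv hG).toEquiv
  have hψ : powCoprime hco = ψ.permCongr (Units.mulLeft (ZMod.unitOfCoprime d hco.symm)) := by
    refine Equiv.ext fun x => ?_
    obtain ⟨a, rfl⟩ := ψ.surjective x
    simp [ψ, ← map_pow, ← ofAdd_nsmul, nsmul_eq_mul]
  rw [hψ, sign_permCongr, ZMod.sign_mulLeft_unitOfCoprime h4 hd]

theorem FiniteField.sign_eq_neg_one_of_apply_eq_pow {K : Type*} [Field K] [Fintype K]
    [DecidableEq K] {d : ℕ} (σ : Perm K) (hσ : ∀ x, σ x = x ^ d) (hK : Fintype.card K % 4 = 1)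
    (hd : d % 4 = 3) : sign σ = -1 := by
  have hd0 : d ≠ 0 := by omega
  have hco : (Nat.card Kˣ).Coprime d := coprime_card_of_pow_injective fun u v huv =>
    Units.ext <| σ.injective <| by simpa [hσ] using congrArg Units.val huv
  have h4 : 4 ∣ Nat.card Kˣ := by
    rw [Nat.card_eq_fintype_card, Fintype.card_units]; omega
  have hmaps : ∀ x, σ x ≠ 0 ↔ x ≠ 0 := fun x => by simp [hσ, hd0]
  have hτ : σ.subtypePerm hmaps = unitsEquivNeZero.permCongr (powCoprime hco) :=
    Equiv.ext fun x => Subtype.ext (by simp [hσ])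
  rw [← sign_subtypePerm σ (p := (· ≠ 0)) hmaps fun x hx h0 => hx (by simp [h0, hσ, hd0]), hτ,
    sign_permCongr, sign_powCoprime_of_isCyclic h4 hd]

theorem not_mem_S_of_three_mod_four_general (d : ℕ) (hd4 : d % 4 = 3) (c : ℤ)
    (p : ℕ) (hp : p.Prime) (hp4 : p % 4 = 1) : p ∉ Scycle d c := by
  rintro ⟨-, hbij, horbit⟩
  have := Fact.mk hp
  have hodd : Odd (Fintype.card (ZMod p)) := by rw [ZMod.card]; exact Nat.odd_iff.2 (by omega)
  let φ : Perm (ZMod p) := Equiv.ofBijective _ hbij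
  have hφ : sign φ = 1 := sign_eq_one_of_forall_sameCycle
    (sameCycle_of_ncard_range_iterate ((horbit 0).trans (Nat.card_zmod p).symm)) hodd
  have hpow : sign (φ.trans (Equiv.addRight (-c : ZMod p))) = -1 :=
    FiniteField.sign_eq_neg_one_of_apply_eq_pow _ (fun x => by simp [φ]) (by rwa [ZMod.card]) hd4
  rw [sign_trans, hφ, sign_addRight_of_odd_card _ hodd] at hpow
  exact absurd hpow (by decide)

theorem not_mem_S_of_three_mod_four (d : ℕ) (hd : 2 ≤ d) (hd4 : d % 4 = 3) (c : ℤ)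
    (p : ℕ) (hp : p.Prime) (hp4 : p % 4 = 1) : p ∉ Scycle d c :=
  not_mem_S_of_three_mod_four_general d hd4 c p hp hp4
end

section
/- D_{d,c} is equal to the smallest set V of positive integers satisfying: (i) 1 ∈ V; (ii) if n ∈ V and p is a prime with v_p(W_n) > v_p(n) (where v_p denotes the p-adic valuation), then np ∈ V; and (iii) if n ∈ V and p is a prime with p ∣ W_p and p ∤ n, then np ∈ V. -/
/-!
For a prime `q`, the indices `n` with `q ∣ W n` are exactly the multiples of the rank of
apparition `z_q`, the period of `0` under `x ↦ x ^ d + c` on `ZMod q`; in particular `z_q ≤ q`.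
Since `d ≥ 2`, `W z ^ 2 ∣ W (z * k) - W z`, so `W (z * k) = W z * u` with `u ≡ 1` modulo every
divisor of `W z`: a power of `q` divides `W (z * k)` exactly when it divides `W z` (rigidity).
If `n ∈ D` and `p` is its largest prime factor, then every `z_q` with `q ∣ n / p` is at most `p`
and divides `n`, hence divides `n / p`, and rigidity gives `n / p ∈ D`. Moreover either
`z_p ∣ n / p`, and then `v_p(W_{n/p}) = v_p(W_n) ≥ v_p(n)`, or `z_p = p ∤ n / p`. Conversely,
both closure rules preserve `D` because `W` is a divisibility sequence.
-/

/-- `W d c n = φ^n(0)` where `φ(x) = x^d + c`. -/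
def W (d : ℕ) (c : ℤ) (n : ℕ) : ℤ := (fun x : ℤ => x ^ d + c)^[n] 0

/-- `D_{d,c} = {n : n ≥ 1 and n ∣ W_n}`. -/
def Dset (d : ℕ) (c : ℤ) : Set ℕ := {n | 1 ≤ n ∧ (n : ℤ) ∣ W d c n}

open Function

theorem sub_dvd_iterate_sub {R : Type*} [Ring R] {f : R → R} (hf : ∀ x y, x - y ∣ f x - f y)
    (n : ℕ) (x y : R) : x - y ∣ f^[n] x - f^[n] y := by
  induction n with
  | zero => simp
  | succ n ih =>
    rw [iterate_succ_apply', iterate_succ_apply']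
    exact ih.trans (hf _ _)

theorem pow_dvd_iff_of_sq_dvd_sub {R : Type*} [CommRing R] {q x y : R} (hqx : q ∣ x)
    (hxy : x ^ 2 ∣ y - x) (j : ℕ) : q ^ j ∣ y ↔ q ^ j ∣ x := by
  obtain ⟨t, ht⟩ := hxy
  obtain ⟨s, rfl⟩ := hqx
  have hy : y = q * s * (1 + q * s * t) := by linear_combination ht
  have hcop : IsCoprime (q ^ j) (1 + q * s * t) := IsCoprime.pow_left ⟨-(s * t), 1, by ring⟩
  rw [hy]
  exact ⟨hcop.dvd_of_dvd_mul_right, fun h => h.mul_right _⟩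

theorem Int.mul_natCast_dvd_of_pow_padicValNat_succ_dvd {n p : ℕ} {a : ℤ} (hp : p.Prime)
    (hn : n ≠ 0) (hna : (n : ℤ) ∣ a) (hpa : (p : ℤ) ^ (padicValNat p n + 1) ∣ a) :
    (n * p : ℤ) ∣ a := by
  have hsplit : p ^ padicValNat p n * ordCompl[p] n = n := by
    rw [← Nat.factorization_def n hp]; exact Nat.ordProj_mul_ordCompl_eq_self n p
  have hcop : IsCoprime ((p : ℤ) ^ (padicValNat p n + 1)) (ordCompl[p] n : ℤ) :=
    (Nat.isCoprime_iff_coprime.mpr (Nat.coprime_ordCompl hp hn)).pow_left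
  have hcompl : (ordCompl[p] n : ℤ) ∣ a :=
    (Int.natCast_dvd_natCast.mpr (Nat.div_dvd_of_dvd (Nat.ordProj_dvd n p))).trans hna
  have := hcop.mul_dvd hpa hcompl
  rwa [← hsplit, Nat.cast_mul, Nat.cast_pow, mul_right_comm, ← pow_succ]

theorem dvd_or_eq_of_dvd_mul_prime {z m p : ℕ} (hp : p.Prime) (hz : z ∣ m * p) (hzp : z ≤ p) :
    z ∣ m ∨ z = p := by
  rcases hzp.eq_or_lt with rfl | hzp
  · exact Or.inr rfl
  rcases Nat.eq_zero_or_pos z with rfl | hz0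
  · rw [zero_dvd_iff, mul_eq_zero] at hz
    exact Or.inl (zero_dvd_iff.mpr (hz.resolve_right hp.ne_zero))
  have hpz : ¬ p ∣ z := fun h => absurd (Nat.le_of_dvd hz0 h) (by omega)
  exact Or.inl (((hp.coprime_iff_not_dvd).mpr hpz).symm.dvd_of_dvd_mul_right hz)

theorem Nat.exists_eq_mul_greatest_prime_factor {n : ℕ} (hn : 1 < n) :
    ∃ m p, p.Prime ∧ n = m * p ∧ ∀ q, q.Prime → q ∣ m → q ≤ p := by
  have hne : n.primeFactors.Nonempty := Nat.nonempty_primeFactors.mpr hn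
  have hmem := n.primeFactors.max'_mem hne
  obtain ⟨hp, hpn, -⟩ := Nat.mem_primeFactors.mp hmem
  refine ⟨n / _, _, hp, (Nat.div_mul_cancel hpn).symm, fun q hq hqm => ?_⟩
  exact n.primeFactors.le_max' q
    (Nat.mem_primeFactors.mpr ⟨hq, hqm.trans (Nat.div_dvd_of_dvd hpn), by omega⟩)

theorem sub_dvd_iterate_pow_add_sub (d : ℕ) (c : ℤ) (m : ℕ) (x y : ℤ) :
    x - y ∣ (fun x : ℤ => x ^ d + c)^[m] x - (fun x : ℤ => x ^ d + c)^[m] y :=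
  sub_dvd_iterate_sub (fun x y => by
    simpa only [add_sub_add_right_eq_sub] using sub_dvd_pow_sub_pow x y d) m x y

section Iteration

variable {d : ℕ} {c : ℤ}

theorem W_add (m n : ℕ) : W d c (m + n) = (fun x : ℤ => x ^ d + c)^[m] (W d c n) := by
  rw [W, W, iterate_add_apply]

theorem W_dvd_W_add_sub (m n : ℕ) : W d c n ∣ W d c (m + n) - W d c m := by
  have h := sub_dvd_iterate_pow_add_sub d c m (W d c n) 0
  rw [sub_zero] at h
  rwa [W_add]

theorem W_dvd_W_of_dvd {m n : ℕ} (h : m ∣ n) : W d c m ∣ W d c n := by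
  obtain ⟨k, rfl⟩ := h
  induction k with
  | zero => simp [W]
  | succ k ih =>
    have h := W_dvd_W_add_sub (d := d) (c := c) (m * k) m
    rw [mul_add_one]
    simpa using dvd_add h ih

/-- `W (m + 1 + n)` and `W (m + 1)` are the images under `φ^[m]` of `φ (W n)` and `φ 0`, whose
difference is `W n ^ d`. -/
theorem W_sq_dvd_W_add_sub (hd : 2 ≤ d) {m : ℕ} (hm : m ≠ 0) (n : ℕ) :
    W d c n ^ 2 ∣ W d c (m + n) - W d c m := by
  obtain ⟨m, rfl⟩ := Nat.exists_eq_add_one_of_ne_zero hm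
  have h := sub_dvd_iterate_pow_add_sub d c m (W d c n ^ d + c) (0 ^ d + c)
  rw [zero_pow (by omega), zero_add, add_sub_cancel_right] at h
  have hmn : W d c (m + 1 + n) = (fun x : ℤ => x ^ d + c)^[m] (W d c n ^ d + c) := by
    rw [W_add, iterate_succ_apply]
  have hm : W d c (m + 1) = (fun x : ℤ => x ^ d + c)^[m] c := by
    rw [W, iterate_succ_apply, zero_pow (by omega), zero_add]
  rw [hmn, hm]
  exact (pow_dvd_pow _ hd).trans h

theorem W_sq_dvd_W_mul_sub (hd : 2 ≤ d) (z : ℕ) {k : ℕ} (hk : k ≠ 0) :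
    W d c z ^ 2 ∣ W d c (z * k) - W d c z := by
  rcases eq_or_ne z 0 with rfl | hz
  · simp
  obtain ⟨k, rfl⟩ := Nat.exists_eq_add_one_of_ne_zero hk
  rw [mul_add_one, add_comm]
  exact (pow_dvd_pow_of_dvd (W_dvd_W_of_dvd (dvd_mul_right z k)) 2).trans
    (W_sq_dvd_W_add_sub hd hz _)

theorem pow_dvd_W_mul_iff (hd : 2 ≤ d) {q : ℤ} {z k : ℕ} (hq : q ∣ W d c z) (hk : k ≠ 0)
    (j : ℕ) : q ^ j ∣ W d c (z * k) ↔ q ^ j ∣ W d c z :=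
  pow_dvd_iff_of_sq_dvd_sub hq (W_sq_dvd_W_mul_sub hd z hk) j

theorem Int.cast_W {R : Type*} [Ring R] (d : ℕ) (c : ℤ) (n : ℕ) :
    (W d c n : R) = (fun y : R => y ^ d + c)^[n] 0 := by
  have hsemi : Semiconj (Int.cast : ℤ → R) (fun x => x ^ d + c) (fun y => y ^ d + c) :=
    fun x => by push_cast; rfl
  have h := hsemi.iterate_right n 0
  rw [Int.cast_zero] at h
  exact h

end Iteration

/-- The rank of apparition of `q`: the least `n ≥ 1` with `q ∣ W n`, or `0` if there is none. -/
noncomputable def rankOfApparition (d : ℕ) (c : ℤ) (q : ℕ) : ℕ :=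
  minimalPeriod (fun y : ZMod q => y ^ d + c) 0

section Rank

variable {d : ℕ} {c : ℤ}

theorem natCast_dvd_W_iff (q n : ℕ) : (q : ℤ) ∣ W d c n ↔ rankOfApparition d c q ∣ n := by
  rw [← ZMod.intCast_zmod_eq_zero_iff_dvd, Int.cast_W, rankOfApparition,
    ← isPeriodicPt_iff_minimalPeriod_dvd]
  rfl

theorem rankOfApparition_le {q : ℕ} (hq : q ≠ 0) : rankOfApparition d c q ≤ q := by
  have : NeZero q := ⟨hq⟩
  exact minimalPeriod_le_card.trans_eq (ZMod.card q)

theorem pow_dvd_W_iff_of_rankOfApparition_dvd (hd : 2 ≤ d) {q m n : ℕ}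
    (hm : rankOfApparition d c q ∣ m) (hn : rankOfApparition d c q ∣ n) (hm0 : m ≠ 0)
    (hn0 : n ≠ 0) (j : ℕ) : (q : ℤ) ^ j ∣ W d c m ↔ (q : ℤ) ^ j ∣ W d c n := by
  have hq : (q : ℤ) ∣ W d c (rankOfApparition d c q) := (natCast_dvd_W_iff _ _).mpr dvd_rfl
  obtain ⟨k, rfl⟩ := hm
  obtain ⟨l, rfl⟩ := hn
  rw [pow_dvd_W_mul_iff hd hq (right_ne_zero_of_mul hm0),
    pow_dvd_W_mul_iff hd hq (right_ne_zero_of_mul hn0)]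

end Rank

section Dset

variable {d : ℕ} {c : ℤ}

theorem ne_zero_of_mem_Dset {n : ℕ} (hn : n ∈ Dset d c) : n ≠ 0 :=
  Nat.one_le_iff_ne_zero.mp hn.1

theorem mul_mem_Dset_of_pow_padicValNat_succ_dvd {n p : ℕ} (hn : n ∈ Dset d c) (hp : p.Prime)
    (h : (p : ℤ) ^ (padicValNat p n + 1) ∣ W d c n) : n * p ∈ Dset d c := by
  have hW : W d c n ∣ W d c (n * p) := W_dvd_W_of_dvd (dvd_mul_right n p)
  refine ⟨Nat.one_le_iff_ne_zero.mpr (mul_ne_zero (ne_zero_of_mem_Dset hn) hp.ne_zero), ?_⟩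
  push_cast
  exact Int.mul_natCast_dvd_of_pow_padicValNat_succ_dvd hp (ne_zero_of_mem_Dset hn)
    (hn.2.trans hW) (h.trans hW)

theorem mul_mem_Dset_of_not_dvd {n p : ℕ} (hn : n ∈ Dset d c) (hp : p.Prime)
    (hpW : (p : ℤ) ∣ W d c p) (hpn : ¬ p ∣ n) : n * p ∈ Dset d c := by
  have hcop : IsCoprime (n : ℤ) p :=
    Nat.isCoprime_iff_coprime.mpr (hp.coprime_iff_not_dvd.mpr hpn).symm
  refine ⟨Nat.one_le_iff_ne_zero.mpr (mul_ne_zero (ne_zero_of_mem_Dset hn) hp.ne_zero), ?_⟩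
  push_cast
  exact hcop.mul_dvd (hn.2.trans (W_dvd_W_of_dvd (dvd_mul_right n p)))
    (hpW.trans (W_dvd_W_of_dvd (dvd_mul_left p n)))

theorem rankOfApparition_dvd_or_eq_of_mul_mem_Dset {m p q : ℕ} (h : m * p ∈ Dset d c)
    (hp : p.Prime) (hq : q.Prime) (hqm : q ∣ m * p) (hqp : q ≤ p) :
    rankOfApparition d c q ∣ m ∨ rankOfApparition d c q = p :=
  dvd_or_eq_of_dvd_mul_prime hp
    ((natCast_dvd_W_iff q _).mp ((Int.natCast_dvd_natCast.mpr hqm).trans h.2))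
    ((rankOfApparition_le hq.ne_zero).trans hqp)

theorem mem_Dset_of_mul_mem_Dset (hd : 2 ≤ d) {m p : ℕ} (hp : p.Prime)
    (hmax : ∀ q, q.Prime → q ∣ m → q ≤ p) (h : m * p ∈ Dset d c) : m ∈ Dset d c := by
  have hm0 : m ≠ 0 := left_ne_zero_of_mul (ne_zero_of_mem_Dset h)
  refine ⟨Nat.one_le_iff_ne_zero.mpr hm0, Int.natCast_dvd.mpr ?_⟩
  refine (Nat.dvd_iff_prime_pow_dvd_dvd _ _).mpr fun q k hq hqk => ?_
  rcases Nat.eq_zero_or_pos k with rfl | hk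
  · simp
  have hqm : q ∣ m := (dvd_pow_self q hk.ne').trans hqk
  have hrank : rankOfApparition d c q ∣ m := by
    rcases rankOfApparition_dvd_or_eq_of_mul_mem_Dset h hp hq (hqm.mul_right p)
      (hmax q hq hqm) with hrank | hrank
    · exact hrank
    · have hqp : q = p := le_antisymm (hmax q hq hqm) (hrank ▸ rankOfApparition_le hq.ne_zero)
      rwa [hrank, ← hqp]
  have hWmp : ((q ^ k : ℕ) : ℤ) ∣ W d c (m * p) :=
    (Int.natCast_dvd_natCast.mpr (hqk.mul_right p)).trans h.2
  rw [← Int.natCast_dvd, Nat.cast_pow] at *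
  exact (pow_dvd_W_iff_of_rankOfApparition_dvd hd hrank (hrank.mul_right p) hm0
    (ne_zero_of_mem_Dset h) k).mpr hWmp

theorem pow_dvd_W_or_dvd_W_self_of_mul_mem_Dset (hd : 2 ≤ d) {m p : ℕ} (hp : p.Prime)
    (h : m * p ∈ Dset d c) :
    (p : ℤ) ^ (padicValNat p m + 1) ∣ W d c m ∨ ((p : ℤ) ∣ W d c p ∧ ¬ p ∣ m) := by
  have hm0 : m ≠ 0 := left_ne_zero_of_mul (ne_zero_of_mem_Dset h)
  by_cases hrank : rankOfApparition d c p ∣ m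
  · have : Fact p.Prime := ⟨hp⟩
    have hpow : (p : ℤ) ^ padicValNat p (m * p) ∣ W d c (m * p) :=
      (Int.natCast_dvd_natCast.mpr pow_padicValNat_dvd).trans h.2
    rw [padicValNat.mul hm0 hp.ne_zero, padicValNat_self] at hpow
    exact Or.inl ((pow_dvd_W_iff_of_rankOfApparition_dvd hd hrank (hrank.mul_right p) hm0
      (ne_zero_of_mem_Dset h) _).mpr (by exact_mod_cast hpow))
  · have hrank_eq := (rankOfApparition_dvd_or_eq_of_mul_mem_Dset h hp hp (dvd_mul_left p m)
      le_rfl).resolve_left hrank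
    exact Or.inr ⟨(natCast_dvd_W_iff p p).mpr hrank_eq.dvd, hrank_eq ▸ hrank⟩

theorem Dset_subset_of_closed (hd : 2 ≤ d) {V : Set ℕ} (h1V : 1 ∈ V)
    (hii : ∀ n ∈ V, ∀ p : ℕ, p.Prime →
      ((p : ℤ) ^ (padicValNat p n + 1) ∣ W d c n) → n * p ∈ V)
    (hiii : ∀ n ∈ V, ∀ p : ℕ, p.Prime → ((p : ℤ) ∣ W d c p) → ¬ p ∣ n → n * p ∈ V) :
    Dset d c ⊆ V := by
  intro n hn
  induction n using Nat.strong_induction_on with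
  | _ n ih =>
  rcases hn.1.eq_or_lt with rfl | hn1
  · exact h1V
  obtain ⟨m, p, hp, rfl, hmax⟩ := Nat.exists_eq_mul_greatest_prime_factor hn1
  have hm := mem_Dset_of_mul_mem_Dset hd hp hmax hn
  have hmV : m ∈ V :=
    ih m (lt_mul_of_one_lt_right (Nat.pos_of_ne_zero (ne_zero_of_mem_Dset hm)) hp.one_lt) hm
  rcases pow_dvd_W_or_dvd_W_self_of_mul_mem_Dset hd hp hn with h | ⟨hpW, hpm⟩
  · exact hii m hmV p hp h
  · exact hiii m hmV p hp hpW hpm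

end Dset

/-- `D_{d,c}` is the smallest set `V` of positive integers such that `1 ∈ V`, and
`V` is closed under adjoining `n*p` whenever `n ∈ V` and either `p` is a prime with
`v_p(W_n) > v_p(n)` (expressed as `p^(v_p(n)+1) ∣ W_n`, which also covers `W_n = 0`),
or `p` is a prime with `p ∣ W_p` and `p ∤ n`. -/
theorem Dset_eq_graph_vertices (d : ℕ) (hd : 2 ≤ d) (c : ℤ) :
    Dset d c =
    ⋂₀ {V : Set ℕ |
        (∀ n ∈ V, 1 ≤ n) ∧
        1 ∈ V ∧
        (∀ n ∈ V, ∀ p : ℕ, p.Prime →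
          ((p : ℤ) ^ (padicValNat p n + 1) ∣ W d c n) → n * p ∈ V) ∧
        (∀ n ∈ V, ∀ p : ℕ, p.Prime → ((p : ℤ) ∣ W d c p) → ¬ p ∣ n → n * p ∈ V)} := by
  refine Set.Subset.antisymm
    (fun n hn V hV => Dset_subset_of_closed hd hV.2.1 hV.2.2.1 hV.2.2.2 hn) ?_
  exact Set.sInter_subset_of_mem ⟨fun n hn => hn.1, ⟨le_rfl, one_dvd _⟩,
    fun n hn p hp h => mul_mem_Dset_of_pow_padicValNat_succ_dvd hn hp h,
    fun n hn p hp hpW hpn => mul_mem_Dset_of_not_dvd hn hp hpW hpn⟩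
end

section
/- Suppose n ∈ D_{d,c} with n > 1, and let p be the smallest prime divisor of n. Then p ∈ D_{d,c} (i.e. p divides W_p). -/
/-- `P_{d,c}` is the set of primes in `D_{d,c}`. -/
def Pset (d : ℕ) (c : ℤ) : Set ℕ := {p ∈ Dset d c | p.Prime}

lemma W_zero (d : ℕ) (c : ℤ) : W d c 0 = 0 := rfl

lemma W_succ (d : ℕ) (c : ℤ) (k : ℕ) : W d c (k + 1) = (W d c k) ^ d + c := by
  simp [W, Function.iterate_succ_apply']

/-- Key shift lemma: `W i - W j ∣ W (i+m) - W (j+m)`. -/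
lemma W_dvd_shift (d : ℕ) (c : ℤ) (i j : ℕ) (m : ℕ) :
    W d c i - W d c j ∣ W d c (i + m) - W d c (j + m) := by
  induction m with
  | zero => exact dvd_refl _
  | succ m ih =>
    have h : W d c (i + (m + 1)) - W d c (j + (m + 1))
        = (W d c (i + m)) ^ d - (W d c (j + m)) ^ d := by
      rw [show i + (m + 1) = (i + m) + 1 from rfl, show j + (m + 1) = (j + m) + 1 from rfl,
        W_succ, W_succ]
      ring
    rw [h]
    exact ih.trans (sub_dvd_pow_sub_pow _ _ d)

theorem minFac_mem_D (d : ℕ) (hd : 2 ≤ d) (c : ℤ) (n : ℕ) (hn : n ∈ Dset d c)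
    (hn1 : 1 < n) :
    n.minFac ∈ Dset d c ∧ (n.minFac : ℤ) ∣ W d c n.minFac := by
  set p := n.minFac with hp
  have pp : p.Prime := Nat.minFac_prime (by omega)
  have hpn : (p : ℤ) ∣ W d c n :=
    dvd_trans (Int.natCast_dvd_natCast.mpr (Nat.minFac_dvd n)) hn.2
  have hex : ∃ k, 1 ≤ k ∧ (p : ℤ) ∣ W d c k := ⟨n, hn.1, hpn⟩
  classical
  set r := Nat.find hex with hr
  obtain ⟨hr1, hrdvd⟩ : 1 ≤ r ∧ (p : ℤ) ∣ W d c r := Nat.find_spec hex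
  have hmin : ∀ k < r, ¬(1 ≤ k ∧ (p : ℤ) ∣ W d c k) := fun k hk => Nat.find_min hex hk
  -- periodicity
  have per : ∀ m, (p : ℤ) ∣ W d c (r + m) - W d c m := by
    intro m
    have h := W_dvd_shift d c r 0 m
    rw [W_zero, sub_zero, Nat.zero_add] at h
    exact hrdvd.trans h
  have key : ∀ q s, ((p : ℤ) ∣ W d c (q * r + s) ↔ (p : ℤ) ∣ W d c s) := by
    intro q
    induction q with
    | zero => simp
    | succ q ih =>
      intro s
      have heq : (q + 1) * r + s = r + (q * r + s) := by ring
      rw [heq]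
      constructor
      · intro h
        exact (ih s).mp (by
          have := dvd_sub h (per (q * r + s))
          simpa using this)
      · intro h
        have h' := (ih s).mpr h
        have := dvd_add (per (q * r + s)) h'
        simpa using this
  -- r divides any k ≥ 1 with p ∣ W k
  have hdvd_of : ∀ k, 1 ≤ k → (p : ℤ) ∣ W d c k → r ∣ k := by
    intro k hk hWk
    have hks : k = k / r * r + k % r := (Nat.div_add_mod' k r).symm
    have hs : (p : ℤ) ∣ W d c (k % r) := (key (k / r) (k % r)).mp (by rwa [← hks])
    rcases Nat.eq_zero_or_pos (k % r) with h0 | h1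
    · exact Nat.dvd_of_mod_eq_zero h0
    · exact absurd ⟨h1, hs⟩ (hmin _ (Nat.mod_lt _ (by omega)))
  have hrn : r ∣ n := hdvd_of n hn.1 hpn
  -- r ≤ p : injectivity of k ↦ W k mod p on Fin r
  haveI : NeZero p := ⟨pp.pos.ne'⟩
  have haux : ∀ i j : Fin r, (i : ℕ) < (j : ℕ) →
      ((W d c i : ℤ) : ZMod p) = ((W d c j : ℤ) : ZMod p) → False := by
    intro i j hlt hij
    have hdij : (p : ℤ) ∣ W d c i - W d c j := by
      have := (ZMod.intCast_eq_intCast_iff' _ _ _).mp hij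
      exact (Int.ModEq.dvd this.symm)
    have hsh := hdij.trans (W_dvd_shift d c i j (r - (j : ℕ)))
    have hje : (j : ℕ) + (r - (j : ℕ)) = r := by omega
    rw [hje] at hsh
    have hWi : (p : ℤ) ∣ W d c ((i : ℕ) + (r - (j : ℕ))) := by
      have := dvd_add hsh hrdvd
      simpa using this
    have hlt' : (i : ℕ) + (r - (j : ℕ)) < r := by omega
    exact hmin _ hlt' ⟨by omega, hWi⟩
  have hinj : Function.Injective (fun k : Fin r => ((W d c k : ℤ) : ZMod p)) := by
    intro i j hij
    rcases lt_trichotomy (i : ℕ) (j : ℕ) with h | h | h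
    · exact absurd (haux i j h hij) not_false
    · exact Fin.ext h
    · exact absurd (haux j i h hij.symm) not_false
  have hrp : r ≤ p := by
    have := Fintype.card_le_of_injective _ hinj
    simpa [ZMod.card] using this
  -- r = 1 or r = p
  have hrdvdp : r ∣ p := by
    rcases eq_or_lt_of_le hr1 with h1 | h1
    · exact h1 ▸ one_dvd p
    · have hq : r.minFac.Prime := Nat.minFac_prime (by omega)
      have : p ≤ r.minFac := Nat.minFac_le_of_dvd hq.two_le ((Nat.minFac_dvd r).trans hrn)
      have : r = p := le_antisymm hrp (this.trans (Nat.minFac_le (by omega)))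
      exact this ▸ dvd_refl p
  obtain ⟨q, hq⟩ := hrdvdp
  have : (p : ℤ) ∣ W d c p := by
    have := (key q 0).mpr (by simp [W_zero])
    rwa [Nat.add_zero, Nat.mul_comm, ← hq] at this
  exact ⟨⟨pp.pos, this⟩, this⟩
end

section
/- If a, b ∈ D_{d,c} and gcd(a, b) = 1, then ab ∈ D_{d,c}. -/
lemma iter_sub_dvd (d : ℕ) (c : ℤ) (n : ℕ) (x y : ℤ) :
    (x - y) ∣ ((fun x : ℤ => x ^ d + c)^[n] x - (fun x : ℤ => x ^ d + c)^[n] y) := by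
  induction n with
  | zero => simp
  | succ n ih =>
    rw [Function.iterate_succ_apply', Function.iterate_succ_apply']
    have : ((fun x : ℤ => x ^ d + c)^[n] x) ^ d + c - (((fun x : ℤ => x ^ d + c)^[n] y) ^ d + c)
        = ((fun x : ℤ => x ^ d + c)^[n] x) ^ d - ((fun x : ℤ => x ^ d + c)^[n] y) ^ d := by ring
    rw [this]
    exact ih.trans (sub_dvd_pow_sub_pow _ _ d)

lemma dvd_W_mul (d : ℕ) (c : ℤ) (a : ℕ) (ha : (a : ℤ) ∣ W d c a) (k : ℕ) :
    (a : ℤ) ∣ W d c (k * a) := by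
  induction k with
  | zero => simp [W]
  | succ k ih =>
    have h1 : (W d c (k * a) - 0) ∣ (W d c (a + k * a) - W d c a) := by
      have := iter_sub_dvd d c a (W d c (k * a)) 0
      simpa [W, Function.iterate_add_apply] using this
    have h2 : (a : ℤ) ∣ (W d c (a + k * a) - W d c a) :=
      dvd_trans (by simpa using ih) h1
    have : (a : ℤ) ∣ W d c (a + k * a) := by
      have := dvd_add h2 ha
      simpa using this
    simpa [Nat.succ_mul, Nat.add_comm] using this

theorem mul_mem_D_of_coprime (d : ℕ) (hd : 2 ≤ d) (c : ℤ) (a b : ℕ)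
    (ha : a ∈ Dset d c) (hb : b ∈ Dset d c) (hab : Nat.gcd a b = 1) :
    a * b ∈ Dset d c := by
  obtain ⟨ha1, ha2⟩ := ha
  obtain ⟨hb1, hb2⟩ := hb
  refine ⟨Nat.one_le_iff_ne_zero.mpr (by positivity), ?_⟩
  have hA : (a : ℤ) ∣ W d c (a * b) := by
    have := dvd_W_mul d c a ha2 b
    simpa [Nat.mul_comm] using this
  have hB : (b : ℤ) ∣ W d c (a * b) := dvd_W_mul d c b hb2 a
  have hcop : IsCoprime (a : ℤ) (b : ℤ) := by
    rw [Int.isCoprime_iff_gcd_eq_one]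
    simpa using hab
  have := hcop.mul_dvd hA hB
  simpa using this
end

section
/- Let p be a prime and let d ≥ 2 satisfy gcd(d, p−1) = 1, so that π(x) = x^d is a permutation of ℤ/pℤ. Then 0 is a fixed point of π, and for every x ∈ (ℤ/pℤ)* whose multiplicative order is k, the least integer m ≥ 1 with x^{d^m} = x equals the multiplicative order of d modulo k. Consequently, for each divisor k of p−1, the φ(k) elements of (ℤ/pℤ)* of multiplicative order k are partitioned by π into φ(k)/ord_k(d) cycles, each of length ord_k(d), where φ denotes the Euler totient function and ord_k(d) denotes the multiplicative order of d modulo k. -/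
/-!
For `x` of order `k`, `x ^ a = x ^ b` iff `a ≡ b [MOD k]`, so `x ^ d ^ m = x` iff `d ^ m = 1` in
`ZMod k`, i.e. iff `ord_k(d) ∣ m`: the minimal period of `x` under `x ↦ x ^ d` is `ord_k(d)`.
As `d` is coprime to `k`, this map preserves the set of elements of order `k`, which has `φ(k)`
elements because `(ZMod p)ˣ` is cyclic. Forward orbits of periodic points are equal or disjoint,
so this set splits into orbits of size `ord_k(d)`, and there are `φ(k) / ord_k(d)` of them.
-/

open Function Set

theorem Set.ncard_sUnion_of_ncard_eq {α : Type*} {C : Set (Set α)} {t : ℕ} (hC : C.Finite)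
    (hfin : ∀ s ∈ C, s.Finite) (hdisj : C.Pairwise Disjoint) (ht : ∀ s ∈ C, s.ncard = t) :
    (⋃₀ C).ncard = C.ncard * t := by
  rw [sUnion_eq_biUnion, hC.ncard_biUnion hfin hdisj, finsum_mem_congr rfl ht,
    finsum_mem_eq_finite_toFinset_sum _ hC, Finset.sum_const, smul_eq_mul,
    ncard_eq_toFinset_card C hC]

namespace Function

variable {α : Type*} {f : α → α} {A : Set α} {x y : α}

def forwardOrbit (f : α → α) (x : α) : Set α := range fun n => f^[n] x

theorem forwardOrbit_eq_setOf_mem_periodicOrbit (hx : x ∈ periodicPts f) :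
    forwardOrbit f x = {y | y ∈ periodicOrbit f x} := by
  ext y
  simp [forwardOrbit, mem_periodicOrbit_iff hx]

theorem ncard_forwardOrbit (hx : x ∈ periodicPts f) :
    (forwardOrbit f x).ncard = minimalPeriod f x := by
  have hrange : forwardOrbit f x = (f^[·] x) '' Iio (minimalPeriod f x) := by
    refine (image_subset_range _ _).antisymm' ?_
    rintro _ ⟨n, rfl⟩
    exact ⟨n % minimalPeriod f x, Nat.mod_lt _ (minimalPeriod_pos_of_mem_periodicPts hx),
      iterate_mod_minimalPeriod_eq⟩
  have hinj : InjOn (f^[·] x) (Iio (minimalPeriod f x)) := fun m hm n hn h =>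
    (iterate_eq_iterate_iff_of_lt_minimalPeriod hm hn).mp h
  rw [hrange, hinj.ncard_image, ncard_Iio_nat]

theorem forwardOrbit_eq_of_mem (hx : x ∈ periodicPts f) (hy : y ∈ forwardOrbit f x) :
    forwardOrbit f y = forwardOrbit f x := by
  obtain ⟨n, rfl⟩ := hy
  have hy : f^[n] x ∈ periodicPts f :=
    minimalPeriod_pos_iff_mem_periodicPts.mp
      (minimalPeriod_apply_iterate hx n ▸ minimalPeriod_pos_of_mem_periodicPts hx)
  rw [forwardOrbit_eq_setOf_mem_periodicOrbit hx, forwardOrbit_eq_setOf_mem_periodicOrbit hy,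
    periodicOrbit_apply_iterate_eq hx]

theorem pairwise_disjoint_image_forwardOrbit (hA : A ⊆ periodicPts f) :
    (forwardOrbit f '' A).Pairwise Disjoint := by
  rintro _ ⟨x, hx, rfl⟩ _ ⟨y, hy, rfl⟩ hne
  refine not_not.mp fun hmeet => hne ?_
  obtain ⟨z, hzx, hzy⟩ := not_disjoint_iff.mp hmeet
  rw [← forwardOrbit_eq_of_mem (hA hx) hzx, forwardOrbit_eq_of_mem (hA hy) hzy]

theorem sUnion_image_forwardOrbit (hA : MapsTo f A A) :
    ⋃₀ (forwardOrbit f '' A) = A := by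
  refine subset_antisymm ?_ fun x hx =>
    mem_sUnion.mpr ⟨forwardOrbit f x, mem_image_of_mem _ hx, 0, rfl⟩
  rintro _ ⟨_, ⟨x, hx, rfl⟩, n, rfl⟩
  exact hA.iterate n hx

theorem ncard_image_forwardOrbit [Finite α] {t : ℕ} (hA : MapsTo f A A) (ht : 0 < t)
    (hper : ∀ x ∈ A, minimalPeriod f x = t) :
    (forwardOrbit f '' A).ncard = A.ncard / t := by
  have hperiodic : A ⊆ periodicPts f := fun x hx =>
    minimalPeriod_pos_iff_mem_periodicPts.mp (hper x hx ▸ ht)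
  have hcards : ∀ s ∈ forwardOrbit f '' A, s.ncard = t := by
    rintro _ ⟨x, hx, rfl⟩
    rw [ncard_forwardOrbit (hperiodic hx), hper x hx]
  conv_rhs => rw [← sUnion_image_forwardOrbit hA]
  rw [ncard_sUnion_of_ncard_eq (toFinite _) (fun s _ => toFinite s)
    (pairwise_disjoint_image_forwardOrbit hperiodic) hcards, Nat.mul_div_cancel _ ht]

end Function

theorem ZMod.orderOf_natCast_pos {k : ℕ} [NeZero k] {d : ℕ} (hd : d.Coprime k) :
    0 < orderOf (d : ZMod k) := by
  rw [← ZMod.coe_unitOfCoprime d hd, orderOf_units]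
  exact orderOf_pos _

section Group

variable {G : Type*}

theorem pow_pow_eq_self_iff [LeftCancelMonoid G] (x : G) (d m : ℕ) :
    x ^ d ^ m = x ↔ orderOf (d : ZMod (orderOf x)) ∣ m := by
  rw [orderOf_dvd_iff_pow_eq_one, ← Nat.cast_pow, ← Nat.cast_one, ZMod.natCast_eq_natCast_iff,
    ← pow_eq_pow_iff_modEq, pow_one]

theorem minimalPeriod_pow [LeftCancelMonoid G] (x : G) (d : ℕ) :
    minimalPeriod (· ^ d) x = orderOf (d : ZMod (orderOf x)) :=
  Nat.dvd_right_iff_eq.mp fun m => by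
    rw [← isPeriodicPt_iff_minimalPeriod_dvd, IsPeriodicPt, IsFixedPt, pow_iterate,
      pow_pow_eq_self_iff]

theorem mapsTo_pow_setOf_orderOf_eq [Monoid G] {d k : ℕ} (hd : d.Coprime k) :
    MapsTo (· ^ d) {x : G | orderOf x = k} {x | orderOf x = k} := fun x hx =>
  (hx ▸ hd.symm : (orderOf x).Coprime d).orderOf_pow.trans hx

theorem forwardOrbit_pow [Monoid G] (d : ℕ) (x : G) :
    forwardOrbit (· ^ d) x = range fun m => x ^ d ^ m := by
  simp only [forwardOrbit, pow_iterate]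

theorem isLeast_pow_pow_eq_self [LeftCancelMonoid G] [Finite G] (x : G) {d : ℕ}
    (hd : d.Coprime (orderOf x)) :
    IsLeast {m | 1 ≤ m ∧ x ^ d ^ m = x} (orderOf (d : ZMod (orderOf x))) := by
  have : NeZero (orderOf x) := ⟨(orderOf_pos x).ne'⟩
  refine ⟨⟨ZMod.orderOf_natCast_pos hd, (pow_pow_eq_self_iff x d _).mpr dvd_rfl⟩, ?_⟩
  rintro m ⟨hm, h⟩
  exact Nat.le_of_dvd hm ((pow_pow_eq_self_iff x d m).mp h)

end Group

/-- Cycle structure of the power map `π(x) = x^d` on `ℤ/pℤ` when `gcd(d, p-1) = 1`: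
`0` is fixed; an element of multiplicative order `k` lies on a cycle of length
`ord_k(d)` (the multiplicative order of `d` modulo `k`); and for each divisor `k` of
`p-1`, the `φ(k)` elements of order `k` are partitioned into `φ(k)/ord_k(d)` cycles,
each of length `ord_k(d)`. -/
theorem power_map_cycle_structure (p : ℕ) (hp : p.Prime) (d : ℕ) (hd : 2 ≤ d)
    (hgcd : Nat.gcd d (p - 1) = 1) :
    ((0 : ZMod p) ^ d = 0) ∧
    (∀ (x : (ZMod p)ˣ) (k : ℕ), orderOf x = k →
      IsLeast {m : ℕ | 1 ≤ m ∧ x ^ d ^ m = x} (orderOf (d : ZMod k))) ∧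
    (∀ k : ℕ, k ∣ p - 1 →
      Set.ncard {x : (ZMod p)ˣ | orderOf x = k} = Nat.totient k ∧
      ∃ C : Set (Set (ZMod p)ˣ),
        (∀ s ∈ C, ∃ x : (ZMod p)ˣ, orderOf x = k ∧
            s = Set.range fun m : ℕ => x ^ d ^ m) ∧
        (∀ s ∈ C, Set.ncard s = orderOf (d : ZMod k)) ∧
        (⋃₀ C = {x : (ZMod p)ˣ | orderOf x = k}) ∧
        (C.Pairwise Disjoint) ∧
        Set.ncard C = Nat.totient k / orderOf (d : ZMod k)) := by
  have : Fact p.Prime := ⟨hp⟩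
  have hcard : Fintype.card (ZMod p)ˣ = p - 1 := ZMod.card_units p
  have hcop : ∀ k, k ∣ p - 1 → d.Coprime k := fun k hk => Nat.Coprime.coprime_dvd_right hk hgcd
  refine ⟨zero_pow (by omega), fun x k hk => ?_, fun k hk => ?_⟩
  · subst hk
    exact isLeast_pow_pow_eq_self x (hcop _ (hcard ▸ orderOf_dvd_card))
  have : NeZero k := ⟨by rintro rfl; have := hp.two_le; omega⟩
  set A := {x : (ZMod p)ˣ | orderOf x = k}
  have hA : MapsTo (· ^ d) A A := mapsTo_pow_setOf_orderOf_eq (hcop k hk)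
  have ht := ZMod.orderOf_natCast_pos (hcop k hk)
  have hper : ∀ x ∈ A, minimalPeriod (· ^ d) x = orderOf (d : ZMod k) := fun x hx =>
    hx ▸ minimalPeriod_pow x d
  have hperiodic : A ⊆ periodicPts (· ^ d) := fun x hx =>
    minimalPeriod_pos_iff_mem_periodicPts.mp (hper x hx ▸ ht)
  have hcount : A.ncard = Nat.totient k := by
    classical
    rw [ncard_eq_toFinset_card', toFinset_ofPred]
    exact IsCyclic.card_orderOf_eq_totient (hcard ▸ hk)
  refine ⟨hcount, forwardOrbit (· ^ d) '' A, ?_, ?_, sUnion_image_forwardOrbit hA,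
    pairwise_disjoint_image_forwardOrbit hperiodic, ?_⟩
  · rintro _ ⟨x, hx, rfl⟩
    exact ⟨x, hx, forwardOrbit_pow d x⟩
  · rintro _ ⟨x, hx, rfl⟩
    rw [ncard_forwardOrbit (hperiodic hx), hper x hx]
  · rw [ncard_image_forwardOrbit hA ht hper, hcount]
end

section
/- Let p be a prime with p ≡ 1 (mod 4), and let d be an odd integer with d ≥ 2 and gcd(d, p−1) = 1, so that π(x) = x^d is a permutation of ℤ/pℤ. Then π is an odd permutation (its sign is −1) if and only if d ≡ 3 (mod 4). -/
/-!
Since `π` fixes `0`, it has the sign of `w ↦ w ^ d` on the cyclic group `(ℤ/pℤ)ˣ`, that is, of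
multiplication by `d` on `ℤ/2nℤ` with `2n = p - 1`. Writing residues modulo `2n` as `y + nε` with
`0 ≤ y < n` and `ε ∈ {0, 1}`, multiplication by `d` becomes `(y, ε) ↦ (dy mod n, ε + ⌊dy/n⌋)`:
a permutation of the `y`-coordinate acting on both copies (an even permutation), composed with a
flip of `ε` for each `y` with `⌊dy/n⌋` odd. So the sign is `(-1) ^ ∑_{v<n} ⌊dv/n⌋`, and since
`v ↦ dv mod n` permutes `{0, …, n-1}`, that sum is `(d-1)(n-1)/2`. As `4 ∣ p - 1`, `n - 1` is odd,
and the sign is `(-1) ^ ((d-1)/2)`.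
-/

open Equiv Equiv.Perm Finset

theorem Int.units_neg_one_pow_eq_neg_one_iff (k : ℕ) : (-1 : ℤˣ) ^ k = -1 ↔ Odd k := by
  rw [← Units.val_inj]
  push_cast
  exact neg_one_pow_eq_neg_one_iff_odd (by decide)

namespace Equiv.Perm

theorem sign_eq_sign_of_units {M₀ : Type*} [GroupWithZero M₀] [Fintype M₀] [DecidableEq M₀]
    [Fintype M₀ˣ] [DecidableEq M₀ˣ] (π : Perm M₀) (σ : Perm M₀ˣ) (h : ∀ u : M₀ˣ, π u = σ u) :
    sign π = sign σ := by
  have hπ0 : π 0 = 0 := by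
    by_contra h0
    have : π (σ.symm (Units.mk0 _ h0) : M₀) = π 0 := by rw [h, apply_symm_apply, Units.val_mk0]
    exact (σ.symm (Units.mk0 _ h0)).ne_zero (π.injective this)
  have hext : π = σ.extendDomain unitsEquivNeZero := by
    ext x
    by_cases hx : x = 0
    · rw [hx, hπ0, extendDomain_apply_not_subtype σ unitsEquivNeZero (not_not.2 rfl)]
    · lift x to M₀ˣ using isUnit_iff_ne_zero.2 hx
      rw [extendDomain_apply_subtype σ unitsEquivNeZero hx, h,
        show unitsEquivNeZero.symm ⟨(x : M₀), hx⟩ = x from Units.ext rfl]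
      rfl
  rw [hext, sign_extendDomain]

theorem sign_prodCongrRight_trans_prodCongrLeft {α β : Type*} [Fintype α] [DecidableEq α]
    [Fintype β] [DecidableEq β] (hβ : Even (Fintype.card β)) (τ : α → Perm β) (σ : Perm α) :
    sign ((prodCongrRight τ).trans (prodCongrLeft fun _ : β => σ)) = ∏ a, sign (τ a) := by
  obtain ⟨k, hk⟩ := hβ
  rw [sign_trans, sign_prodCongrLeft, sign_prodCongrRight, prod_const, card_univ, hk, ← two_mul,
    pow_mul, Int.units_sq, one_pow, one_mul]

theorem sign_addLeft_natCast_zmod_two (k : ℕ) :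
    sign (Equiv.addLeft (k : ZMod 2)) = (-1) ^ k := by
  rw [Int.units_pow_eq_pow_mod_two, ← ZMod.natCast_mod]
  rcases Nat.mod_two_eq_zero_or_one k with h | h <;> rw [h] <;> decide

end Equiv.Perm

theorem IsCyclic.sign_pow_eq_sign_mulLeft_unitOfCoprime {G : Type*} [Group G] [Fintype G]
    [DecidableEq G] [IsCyclic G] {N d : ℕ} [NeZero N] (hG : Nat.card G = N) (h : d.Coprime N)
    (σ : Perm G) (hσ : ∀ g, σ g = g ^ d) :
    sign σ = sign (Units.mulLeft (ZMod.unitOfCoprime d h)) := by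
  subst hG
  refine (sign_eq_sign_of_equiv _ _
    (Multiplicative.ofAdd.trans (zmodCyclicMulEquiv ‹_›).toEquiv) fun x => ?_).symm
  simp [hσ, ← map_pow, ← ofAdd_nsmul, ZMod.coe_unitOfCoprime]

theorem ZMod.sum_comp_val {M : Type*} [AddCommMonoid M] (n : ℕ) [NeZero n] (f : ℕ → M) :
    ∑ y : ZMod n, f y.val = ∑ v ∈ range n, f v :=
  sum_nbij' val Nat.cast (by simp [val_lt]) (by simp) (fun y _ => natCast_zmod_val y)
    (fun v hv => val_cast_of_lt (mem_range.1 hv)) (fun _ _ => rfl)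

theorem Nat.sum_range_mul_div_mul_two {d n : ℕ} (h : d.Coprime n) :
    (∑ v ∈ range n, d * v / n) * 2 = (d - 1) * (n - 1) := by
  rcases n.eq_zero_or_pos with rfl | hn
  · simp
  have : NeZero n := ⟨hn.ne'⟩
  have hmod : ∑ v ∈ range n, d * v % n = ∑ v ∈ range n, v := by
    rw [← ZMod.sum_comp_val, ← ZMod.sum_comp_val]
    convert Equiv.sum_comp (Units.mulLeft (ZMod.unitOfCoprime d h)) ZMod.val with y
    simp [ZMod.val_mul, ZMod.val_natCast, Nat.mul_mod]
  have hdiv : n * ∑ v ∈ range n, d * v / n + ∑ v ∈ range n, d * v % n =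
      d * ∑ v ∈ range n, v := by
    rw [mul_sum, mul_sum, ← sum_add_distrib]
    exact sum_congr rfl fun v _ => Nat.div_add_mod (d * v) n
  rw [hmod] at hdiv
  have hdiv2 : n * ((∑ v ∈ range n, d * v / n) * 2) + (∑ v ∈ range n, v) * 2 =
      d * ((∑ v ∈ range n, v) * 2) := by linarith
  apply Nat.eq_of_mul_eq_mul_left hn
  calc n * ((∑ v ∈ range n, d * v / n) * 2) = (d - 1) * ((∑ v ∈ range n, v) * 2) := by
        rw [Nat.sub_one_mul]; omega
    _ = n * ((d - 1) * (n - 1)) := by rw [sum_range_id_mul_two]; ring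

namespace ZMod

theorem natCast_mul_eq_of_mod_two_eq (n : ℕ) {a b : ℕ} (h : a % 2 = b % 2) :
    (n : ZMod (2 * n)) * a = n * b := by
  rw [← Nat.cast_mul, ← Nat.cast_mul, natCast_eq_natCast_iff', mul_comm 2,
    Nat.mul_mod_mul_left, Nat.mul_mod_mul_left, h]

theorem surjective_val_add_mul_val (n : ℕ) [NeZero n] :
    Function.Surjective fun x : ZMod n × ZMod 2 => (x.1.val + n * x.2.val : ZMod (2 * n)) := by
  intro z
  refine ⟨(z.val, (z.val / n : ℕ)), ?_⟩
  have hlt : z.val / n < 2 := Nat.div_lt_of_lt_mul (by simpa [mul_comm] using z.val_lt)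
  simp only [val_natCast, Nat.mod_eq_of_lt hlt]
  exact_mod_cast (Nat.mod_add_div z.val n).symm ▸ natCast_zmod_val z

noncomputable def prodEquivTwoMul (n : ℕ) [NeZero n] : ZMod n × ZMod 2 ≃ ZMod (2 * n) :=
  Equiv.ofBijective (fun x => x.1.val + n * x.2.val) <|
    (Fintype.bijective_iff_surjective_and_card _).2
      ⟨surjective_val_add_mul_val n, by simp [mul_comm]⟩

theorem prodEquivTwoMul_apply (n : ℕ) [NeZero n] (y : ZMod n) (ε : ZMod 2) :
    prodEquivTwoMul n (y, ε) = y.val + n * ε.val := rfl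

theorem sign_mulLeft_unitOfCoprime_two_mul {n d : ℕ} [NeZero n] (h : d.Coprime (2 * n)) :
    sign (Units.mulLeft (unitOfCoprime d h)) = (-1) ^ (d / 2 * (n - 1)) := by
  have hd : d % 2 = 1 := Nat.odd_iff.1 (Nat.Coprime.odd_of_right (h.coprime_dvd_right ⟨n, rfl⟩))
  have hdn : d.Coprime n := h.coprime_dvd_right ⟨2, mul_comm 2 n⟩
  set σ := Units.mulLeft (unitOfCoprime d hdn)
  set c : ZMod n → ZMod 2 := fun y => ((d * y.val / n : ℕ) : ZMod 2)
  have hlift : ∀ x, prodEquivTwoMul n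
      (((prodCongrRight fun y => Equiv.addLeft (c y)).trans (prodCongrLeft fun _ => σ)) x) =
      Units.mulLeft (unitOfCoprime d h) (prodEquivTwoMul n x) := by
    rintro ⟨y, ε⟩
    simp only [trans_apply, prodCongrRight_apply, prodCongrLeft_apply, prodEquivTwoMul_apply,
      Units.mulLeft_apply, coe_unitOfCoprime, Equiv.coe_addLeft, σ, c]
    set q := d * y.val / n
    have hdy : ((d : ZMod n) * y).val = d * y.val % n := by
      rw [val_mul, val_natCast, Nat.mod_mul_mod]
    have hqε : ((q : ZMod 2) + ε).val % 2 = (q + ε.val) % 2 := by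
      rw [val_add, val_natCast]
      omega
    have hdε : d * ε.val % 2 = ε.val % 2 := by rw [Nat.mul_mod, hd, one_mul, Nat.mod_mod]
    calc _ = ((d * y.val % n : ℕ) : ZMod (2 * n)) + n * ((q + ε.val : ℕ) : ZMod (2 * n)) := by
          rw [hdy, natCast_mul_eq_of_mod_two_eq n hqε]
      _ = ((n * q + d * y.val % n : ℕ) : ZMod (2 * n)) + n * (ε.val : ℕ) := by push_cast; ring
      _ = ((d * y.val : ℕ) : ZMod (2 * n)) + n * ((d * ε.val : ℕ) : ZMod (2 * n)) := by
          rw [Nat.div_add_mod, natCast_mul_eq_of_mod_two_eq n hdε]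
      _ = _ := by push_cast; ring
  rw [← sign_eq_sign_of_equiv _ _ _ hlift, sign_prodCongrRight_trans_prodCongrLeft (by decide)]
  simp only [c, sign_addLeft_natCast_zmod_two, prod_pow_eq_pow_sum]
  rw [sum_comp_val n (fun v => d * v / n)]
  congr 1
  have hsum := Nat.sum_range_mul_div_mul_two hdn
  rw [show d - 1 = d / 2 * 2 by omega] at hsum
  linarith

end ZMod

theorem power_map_sign_general (p : ℕ) [Fact p.Prime] (hp4 : p % 4 = 1)
    (d : ℕ) (hdodd : Odd d) (hgcd : Nat.gcd d (p - 1) = 1)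
    (π : Equiv.Perm (ZMod p)) (hπ : ∀ x : ZMod p, π x = x ^ d) :
    Equiv.Perm.sign π = -1 ↔ d % 4 = 3 := by
  have hcard : Nat.card (ZMod p)ˣ = p - 1 := by rw [Nat.card_eq_fintype_card, ZMod.card_units]
  obtain ⟨m, hm⟩ : ∃ m, p - 1 = 2 * (2 * m + 2) :=
    ⟨(p - 5) / 4, by have := (Fact.out : p.Prime).two_le; omega⟩
  rw [sign_eq_sign_of_units π (powCoprime (hcard ▸ Nat.coprime_comm.1 hgcd)) fun u => by simp [hπ],
    IsCyclic.sign_pow_eq_sign_mulLeft_unitOfCoprime (hcard.trans hm) (hm ▸ hgcd) _ fun _ => rfl,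
    ZMod.sign_mulLeft_unitOfCoprime_two_mul, Int.units_neg_one_pow_eq_neg_one_iff, Nat.odd_mul,
    Nat.odd_iff, Nat.odd_iff]
  have := Nat.odd_iff.1 hdodd
  omega

/-- For a prime `p ≡ 1 (mod 4)` and odd `d ≥ 2` with `gcd(d, p-1) = 1`, the
permutation `x ↦ x^d` of `ℤ/pℤ` is odd (has sign `-1`) iff `d ≡ 3 (mod 4)`. -/
theorem power_map_sign (p : ℕ) [Fact p.Prime] (hp4 : p % 4 = 1)
    (d : ℕ) (hd : 2 ≤ d) (hdodd : Odd d) (hgcd : Nat.gcd d (p - 1) = 1)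
    (π : Equiv.Perm (ZMod p)) (hπ : ∀ x : ZMod p, π x = x ^ d) :
    Equiv.Perm.sign π = -1 ↔ d % 4 = 3 :=
  power_map_sign_general p hp4 d hdodd hgcd π hπ
end
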